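/- Let (X, d) be a complete metric space and let {T_i : X → X}_{i∈ℕ} be a sequence of maps such that each T_i is a φ_i-contraction for a comparison function φ_i with φ_i(t) < t for all t > 0. Suppose there exists x₀ ∈ X with sup_{i≥1} d(T_i(x₀), x₀) ≤ M < ∞, and suppose that for every t > 0 the series Σ_{k=1}^∞ φ₁∘φ₂∘⋯∘φ_k(t) converges. Then the backward trajectories Ψ_k(x) = T₁∘T₂∘⋯∘T_k(x) converge, for every initial point x ∈ X, to one and the same limit point in X (independent of x). -/
import Mathlib


open Filter Set Topology

/-- Backward composition: `bwdComp g k = g 0 ∘ g 1 ∘ ⋯ ∘ g (k-1)`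
(i.e. `g₁ ∘ g₂ ∘ ⋯ ∘ g_k` in 1-based notation). -/
def bwdComp {α : Type*} (g : ℕ → α → α) : ℕ → α → α
  | 0 => id
  | k + 1 => fun a => bwdComp g k (g k a)

lemma bwdComp_nonneg (φ : ℕ → ℝ → ℝ) (hmap : ∀ i, ∀ t : ℝ, 0 ≤ t → 0 ≤ φ i t) :
    ∀ k, ∀ t : ℝ, 0 ≤ t → 0 ≤ bwdComp φ k t := by
  intro k
  induction k with
  | zero => intro t ht; simpa [bwdComp] using ht
  | succ k ih => intro t ht; exact ih _ (hmap k t ht)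

lemma bwdComp_mono (φ : ℕ → ℝ → ℝ) (hmap : ∀ i, ∀ t : ℝ, 0 ≤ t → 0 ≤ φ i t)
    (hmono : ∀ i, ∀ s t : ℝ, 0 ≤ s → s ≤ t → φ i s ≤ φ i t) :
    ∀ k, ∀ s t : ℝ, 0 ≤ s → s ≤ t → bwdComp φ k s ≤ bwdComp φ k t := by
  intro k
  induction k with
  | zero => intro s t _ hst; simpa [bwdComp] using hst
  | succ k ih =>
    intro s t hs hst
    exact ih _ _ (hmap k s hs) (hmono k s t hs hst)

lemma bwdComp_contr {X : Type*} [MetricSpace X] (T : ℕ → X → X) (φ : ℕ → ℝ → ℝ)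
    (hmap : ∀ i, ∀ t : ℝ, 0 ≤ t → 0 ≤ φ i t)
    (hmono : ∀ i, ∀ s t : ℝ, 0 ≤ s → s ≤ t → φ i s ≤ φ i t)
    (hcontr : ∀ i, ∀ x y : X, dist (T i x) (T i y) ≤ φ i (dist x y)) :
    ∀ k, ∀ x y : X, dist (bwdComp T k x) (bwdComp T k y) ≤ bwdComp φ k (dist x y) := by
  intro k
  induction k with
  | zero => intro x y; simp [bwdComp]
  | succ k ih =>
    intro x y
    calc dist (bwdComp T k (T k x)) (bwdComp T k (T k y))
        ≤ bwdComp φ k (dist (T k x) (T k y)) := ih _ _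
      _ ≤ bwdComp φ k (φ k (dist x y)) :=
          bwdComp_mono φ hmap hmono k _ _ dist_nonneg (hcontr k x y)

/-- If each `T i` is a `φ i`-contraction for comparison functions `φ i`
with `φ i t < t` for `t > 0`, the displacements `d(T i x₀, x₀)` are uniformly bounded for
some `x₀`, and `∑ₖ φ₁∘⋯∘φ_k (t) < ∞` for every `t > 0`, then the backward trajectories
converge, from every initial point, to one and the same limit. -/
theorem backward_trajectories_convergence {X : Type*} [MetricSpace X] [CompleteSpace X]
    (T : ℕ → X → X) (φ : ℕ → ℝ → ℝ)
    (hmap : ∀ i, ∀ t : ℝ, 0 ≤ t → 0 ≤ φ i t)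
    (hmono : ∀ i, ∀ s t : ℝ, 0 ≤ s → s ≤ t → φ i s ≤ φ i t)
    (hiter : ∀ i, ∀ t : ℝ, 0 ≤ t → Tendsto (fun p => (φ i)^[p] t) atTop (nhds 0))
    (hlt : ∀ i, ∀ t : ℝ, 0 < t → φ i t < t)
    (hcontr : ∀ i, ∀ x y : X, dist (T i x) (T i y) ≤ φ i (dist x y))
    (x₀ : X) (M : ℝ) (hM : ∀ i, dist (T i x₀) x₀ ≤ M)
    (hsum : ∀ t : ℝ, 0 < t → Summable (fun k => bwdComp φ (k + 1) t)) :
    ∃ p : X, ∀ x : X, Tendsto (fun k => bwdComp T k x) atTop (nhds p) := by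
  have hM0 : 0 ≤ M := le_trans dist_nonneg (hM 0)
  have hM1 : (0:ℝ) < M + 1 := by linarith
  -- bound the consecutive distances
  set d : ℕ → ℝ := fun n => Nat.rec (M + 1) (fun n _ => bwdComp φ (n + 1) (M + 1)) n with hd
  have hd0 : d 0 = M + 1 := rfl
  have hds : ∀ n, d (n + 1) = bwdComp φ (n + 1) (M + 1) := fun n => rfl
  have hdsum : Summable d := by
    rw [← summable_nat_add_iff 1]
    simpa [hds] using hsum (M + 1) hM1
  have hbound : ∀ n, dist (bwdComp T n x₀) (bwdComp T (n + 1) x₀) ≤ d n := by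
    intro n
    have h1 : dist (bwdComp T n x₀) (bwdComp T (n + 1) x₀)
        ≤ bwdComp φ n (dist x₀ (T n x₀)) := by
      have := bwdComp_contr T φ hmap hmono hcontr n x₀ (T n x₀)
      simpa [bwdComp] using this
    have hle : dist x₀ (T n x₀) ≤ M + 1 := by
      rw [dist_comm]; linarith [hM n]
    cases n with
    | zero => simpa [bwdComp, hd0] using hle
    | succ n =>
      rw [hds]
      exact h1.trans (bwdComp_mono φ hmap hmono _ _ _ dist_nonneg hle)
  have hcauchy : CauchySeq (fun n => bwdComp T n x₀) :=
    cauchySeq_of_dist_le_of_summable d hbound hdsum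
  obtain ⟨p, hp⟩ := cauchySeq_tendsto_of_complete hcauchy
  refine ⟨p, fun x => ?_⟩
  -- bwdComp φ k t → 0 for every t ≥ 0
  have hzero : ∀ t : ℝ, 0 ≤ t → Tendsto (fun k => bwdComp φ k t) atTop (nhds 0) := by
    intro t ht
    have ht1 : (0:ℝ) < t + 1 := by linarith
    have hsumm := (hsum (t + 1) ht1).tendsto_atTop_zero
    have htail : Tendsto (fun k => bwdComp φ k (t + 1)) atTop (nhds 0) := by
      rw [← tendsto_add_atTop_iff_nat 1]; exact hsumm
    refine squeeze_zero (fun k => bwdComp_nonneg φ hmap k t ht)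
      (fun k => bwdComp_mono φ hmap hmono k t (t + 1) ht (by linarith)) htail
  -- dist between trajectories from x and x₀ tends to 0
  have hdx : Tendsto (fun k => dist (bwdComp T k x) (bwdComp T k x₀)) atTop (nhds 0) :=
    squeeze_zero (fun k => dist_nonneg)
      (fun k => bwdComp_contr T φ hmap hmono hcontr k x x₀) (hzero _ dist_nonneg)
  have hpd : Tendsto (fun k => dist (bwdComp T k x₀) p) atTop (nhds 0) :=
    (tendsto_iff_dist_tendsto_zero).mp hp
  rw [tendsto_iff_dist_tendsto_zero]
  have hsumt : Tendsto (fun k => dist (bwdComp T k x) (bwdComp T k x₀)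
      + dist (bwdComp T k x₀) p) atTop (nhds 0) := by
    simpa using hdx.add hpd
  exact squeeze_zero (fun k => dist_nonneg) (fun k => dist_triangle _ _ _) hsumt
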